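/- For every finite simple graph G on n ≥ 2 vertices, the number of spanning trees satisfies τ(G) ≤ ((Tr(Δ) − Δ_max)/(n−1))^{n−1}, where Δ is the diagonal degree matrix of G and Δ_max its maximum degree. -/

import Mathlib

open Matrix
open scoped Classical

/-- Adjacency matrix of a simple graph, as a real matrix. -/
noncomputable def adjMat {n : ℕ} (G : SimpleGraph (Fin n)) : Matrix (Fin n) (Fin n) ℝ :=
  Matrix.of fun i j => if G.Adj i j then (1 : ℝ) else 0

/-- Diagonal degree matrix of a simple graph. -/
noncomputable def degMat {n : ℕ} (G : SimpleGraph (Fin n)) : Matrix (Fin n) (Fin n) ℝ :=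
  Matrix.diagonal fun i => (Nat.card (G.neighborSet i) : ℝ)

/-- Combinatorial Laplacian. -/
noncomputable def lapMat {n : ℕ} (G : SimpleGraph (Fin n)) : Matrix (Fin n) (Fin n) ℝ :=
  degMat G - adjMat G

/-- Number of spanning trees of `G`: spanning subgraphs of `G` that are trees. -/
noncomputable def numSpanningTrees {n : ℕ} (G : SimpleGraph (Fin n)) : ℕ :=
  Nat.card {H : SimpleGraph (Fin n) // H ≤ G ∧ H.IsTree}

/-- Matrix logarithm via functional calculus (log of eigenvalues), with log 0 = 0. -/
noncomputable def matLog {n : ℕ} (M : Matrix (Fin n) (Fin n) ℝ) : Matrix (Fin n) (Fin n) ℝ :=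
  if hM : M.IsHermitian then
    (hM.eigenvectorUnitary : Matrix (Fin n) (Fin n) ℝ) *
      Matrix.diagonal (fun i => Real.log (hM.eigenvalues i)) *
      star (hM.eigenvectorUnitary : Matrix (Fin n) (Fin n) ℝ)
  else 0

/-- Quantum relative entropy S(σ₁‖σ₂) = Tr(σ₁ log σ₁) − Tr(σ₁ log σ₂). -/
noncomputable def qRelEntropy {n : ℕ} (σ1 σ2 : Matrix (Fin n) (Fin n) ℝ) : ℝ :=
  (σ1 * matLog σ1).trace - (σ1 * matLog σ2).trace

/-- Projection Π_ℓ = I − E_ℓℓ. -/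
noncomputable def projP {n : ℕ} (ℓ : Fin n) : Matrix (Fin n) (Fin n) ℝ :=
  1 - Matrix.single ℓ ℓ 1

/-- Q_ℓ = E_ℓℓ. -/
noncomputable def projQ {n : ℕ} (ℓ : Fin n) : Matrix (Fin n) (Fin n) ℝ :=
  Matrix.single ℓ ℓ 1

/-- Pinching map Φ_ℓ. -/
noncomputable def pinch {n : ℕ} (ℓ : Fin n) (M : Matrix (Fin n) (Fin n) ℝ) :
    Matrix (Fin n) (Fin n) ℝ :=
  projP ℓ * M * projP ℓ + projQ ℓ * M * projQ ℓ

/-- Maximum degree. -/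
noncomputable def maxDeg {n : ℕ} (G : SimpleGraph (Fin n)) : ℕ :=
  Finset.univ.sup fun i => Nat.card (G.neighborSet i)

/-!
Root a spanning tree `H ≤ G` at a vertex `r` of maximum degree. Every other vertex `v` has a
parent, the penultimate vertex of the unique `r`–`v` path in `H`, and the edges of `H` are exactly
the parent edges. Hence `H` is determined by its parent map, which picks a `G`-neighbour of each
`v ≠ r`, so `τ(G) ≤ ∏_{v ≠ r} deg v`. AM–GM bounds this product by the `(n-1)`-th power of the
mean of the remaining degrees, whose sum is `Tr(Δ) - Δ_max`.
-/

namespace SimpleGraph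

variable {V : Type*} {H : SimpleGraph V}

noncomputable def IsTree.rootPath (hH : H.IsTree) (r v : V) : H.Walk r v :=
  (hH.existsUnique_path r v).choose

lemma IsTree.isPath_rootPath (hH : H.IsTree) (r v : V) : (hH.rootPath r v).IsPath :=
  (hH.existsUnique_path r v).choose_spec.1

noncomputable def IsTree.parent (hH : H.IsTree) (r v : V) : V :=
  (hH.rootPath r v).penultimate

lemma IsTree.parent_adj (hH : H.IsTree) {r v : V} (hv : v ≠ r) : H.Adj (hH.parent r v) v :=
  Walk.adj_penultimate fun hnil => hv hnil.eq.symm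

lemma IsTree.parent_eq_of_adj_of_mem_support (hH : H.IsTree) {r u v : V} (hadj : H.Adj u v)
    (hu : u ∈ (hH.rootPath r v).support) : v ≠ r ∧ hH.parent r v = u := by
  have hpath := hH.isAcyclic.path_concat (hH.isPath_rootPath r u) (hH.isPath_rootPath r v)
    hadj hu
  refine ⟨?_, by rw [IsTree.parent, hpath, Walk.penultimate_concat]⟩
  rintro rfl
  rw [Walk.nil_iff_support_eq.mp (Walk.isPath_iff_nil.mp (hH.isPath_rootPath _ _))] at hu
  exact hadj.ne (List.mem_singleton.mp hu)

lemma IsTree.adj_iff_parent (hH : H.IsTree) (r : V) {u v : V} :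
    H.Adj u v ↔ (v ≠ r ∧ hH.parent r v = u) ∨ (u ≠ r ∧ hH.parent r u = v) := by
  refine ⟨fun hadj => ?_, ?_⟩
  · by_cases hu : u ∈ (hH.rootPath r v).support
    · exact .inl (hH.parent_eq_of_adj_of_mem_support hadj hu)
    · refine .inr (hH.parent_eq_of_adj_of_mem_support hadj.symm ?_)
      exact hH.isAcyclic.mem_support_of_ne_mem_support_of_adj_of_isPath
        (hH.isPath_rootPath r u) (hH.isPath_rootPath r v) hadj hu
  · rintro (⟨hv, rfl⟩ | ⟨hu, rfl⟩)
    exacts [hH.parent_adj hv, (hH.parent_adj hu).symm]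

lemma IsTree.eq_of_parent_eq {H' : SimpleGraph V} (hH : H.IsTree) (hH' : H'.IsTree) (r : V)
    (hparent : ∀ v, v ≠ r → hH.parent r v = hH'.parent r v) : H = H' := by
  ext u v
  rw [hH.adj_iff_parent r, hH'.adj_iff_parent r]
  constructor <;> rintro (⟨hv, h⟩ | ⟨hu, h⟩)
  exacts [.inl ⟨hv, (hparent v hv).symm.trans h⟩, .inr ⟨hu, (hparent u hu).symm.trans h⟩,
    .inl ⟨hv, (hparent v hv).trans h⟩, .inr ⟨hu, (hparent u hu).trans h⟩]

lemma card_isTree_le_prod_card_neighborSet [Fintype V] [DecidableEq V] (G : SimpleGraph V)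
    (r : V) : Nat.card {H : SimpleGraph V // H ≤ G ∧ H.IsTree} ≤
      ∏ v ∈ Finset.univ.erase r, Nat.card (G.neighborSet v) := by
  let parentMap (H : {H : SimpleGraph V // H ≤ G ∧ H.IsTree}) (v : {v // v ≠ r}) :
      G.neighborSet v :=
    ⟨H.2.2.parent r v, H.2.1 (H.2.2.parent_adj v.2).symm⟩
  have hinj : Function.Injective parentMap := fun H H' h => Subtype.ext <|
    H.2.2.eq_of_parent_eq H'.2.2 r fun v hv => congrArg Subtype.val (congrFun h ⟨v, hv⟩)
  calc _ ≤ Nat.card (∀ v : {v // v ≠ r}, G.neighborSet v) := Nat.card_le_card_of_injective _ hinj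
    _ = _ := by
      rw [Nat.card_pi, Finset.prod_subtype (p := (· ≠ r)) _ (by simp)]

end SimpleGraph

lemma Real.prod_le_mean_pow_card {ι : Type*} (s : Finset ι) (z : ι → ℝ)
    (hz : ∀ i ∈ s, 0 ≤ z i) : ∏ i ∈ s, z i ≤ ((∑ i ∈ s, z i) / s.card) ^ s.card := by
  rcases s.eq_empty_or_nonempty with rfl | hs
  · simp
  have hcard : (0 : ℝ) < s.card := by exact_mod_cast hs.card_pos
  have hAMGM := Real.geom_mean_le_arith_mean s (fun _ => 1) z (fun _ _ => zero_le_one)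
    (by simpa using hcard) hz
  simp only [Real.rpow_one, Finset.sum_const, nsmul_eq_mul, mul_one, one_mul] at hAMGM
  calc ∏ i ∈ s, z i = ((∏ i ∈ s, z i) ^ (s.card : ℝ)⁻¹) ^ s.card := by
        rw [← Real.rpow_natCast, ← Real.rpow_mul (Finset.prod_nonneg hz),
          inv_mul_cancel₀ hcard.ne', Real.rpow_one]
    _ ≤ _ := by gcongr; exact Real.rpow_nonneg (Finset.prod_nonneg hz) _

/-- τ(G) ≤ ((Tr(Δ) − Δ_max)/(n−1))^{n−1}. -/
theorem numSpanningTrees_le_reduced_avgDeg_pow (n : ℕ) (hn : 2 ≤ n)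
    (G : SimpleGraph (Fin n)) :
    (numSpanningTrees G : ℝ) ≤
      (((degMat G).trace - (maxDeg G : ℝ)) / ((n : ℝ) - 1)) ^ (n - 1) := by
  have : NeZero n := ⟨by omega⟩
  set d : Fin n → ℝ := fun v => (Nat.card (G.neighborSet v) : ℝ)
  obtain ⟨r, -, hr⟩ := Finset.exists_mem_eq_sup Finset.univ Finset.univ_nonempty
    fun v => Nat.card (G.neighborSet v)
  have hcard : (Finset.univ.erase r).card = n - 1 := by simp
  have hsum : ∑ v ∈ Finset.univ.erase r, d v = (degMat G).trace - maxDeg G := by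
    rw [degMat, trace_diagonal, maxDeg, hr, ← Finset.sum_erase_add _ _ (Finset.mem_univ r)]
    ring
  calc (numSpanningTrees G : ℝ) ≤ ∏ v ∈ Finset.univ.erase r, d v := by
        simp only [numSpanningTrees, d]; exact_mod_cast G.card_isTree_le_prod_card_neighborSet r
    _ ≤ _ := Real.prod_le_mean_pow_card _ d fun v _ => Nat.cast_nonneg _
    _ = _ := by rw [hsum, hcard, Nat.cast_sub (by omega), Nat.cast_one]
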